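/- arXiv:2110.00709 — 2 statements merged into one kernel-verified Lean document; each statement's English description precedes it below -/
import Mathlib

section
/- Let G be a graph, v ∈ V(G), and let G_v^{(ℓ)} denote the graph obtained by attaching a path on ℓ vertices to v (joining v by an edge to one endpoint of the path). If D(G,x), D(G_v^{(1)},x), D(G_v^{(2)},x), D(G_v^{(3)},x) are unimodal with modes μ_0, μ_1, μ_2, μ_3 satisfying 0 ≤ μ_i − μ_{i−1} ≤ 1 for i ∈ {1,2,3}, then D(G_v^{(ℓ)},x) is unimodal for all natural numbers ℓ. -/
/-- A finite set of vertices dominates the graph. -/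
def Dominates {V : Type*} (G : SimpleGraph V) (U : Finset V) : Prop :=
  ∀ v : V, v ∈ U ∨ ∃ u ∈ U, G.Adj u v

/-- The number of dominating sets of size `i`. -/
noncomputable def domCount {V : Type*} [Fintype V] (G : SimpleGraph V) (i : ℕ) : ℕ :=
  Nat.card {U : Finset V // U.card = i ∧ Dominates G U}

/-- The coefficient sequence is non-decreasing up to `k` and non-increasing afterwards,
so in particular `k` is a mode. -/
def UnimodalWithMode (d : ℕ → ℕ) (k : ℕ) : Prop :=
  (∀ i < k, d i ≤ d (i + 1)) ∧ (∀ i, k ≤ i → d (i + 1) ≤ d i)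

/-- Unimodality of a coefficient sequence. -/
def UnimodalSeq (d : ℕ → ℕ) : Prop := ∃ k, UnimodalWithMode d k

/-- The asymmetric adjacency relation for `G` with a path on `l` vertices attached at `v`. -/
def pathAttachRel {V : Type*} (G : SimpleGraph V) (v : V) (l : ℕ) :
    (V ⊕ Fin l) → (V ⊕ Fin l) → Prop
  | .inl a, .inl b => G.Adj a b
  | .inl a, .inr i => a = v ∧ (i : ℕ) = 0
  | .inr i, .inr j => (i : ℕ) + 1 = (j : ℕ)
  | _, _ => False

/-- The graph `G_v^{(l)}`: `G` together with a path on `l` vertices, one endpoint of which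
is joined by an edge to `v`. -/
def pathAttach {V : Type*} (G : SimpleGraph V) (v : V) (l : ℕ) : SimpleGraph (V ⊕ Fin l) :=
  SimpleGraph.fromRel (pathAttachRel G v l)

/-!
Attaching a pendant vertex `p` to a vertex `q` of `H` splits the dominating sets of the new graph
according to whether they contain `p`; keeping track also of the sets that dominate everything
except `q`, three consecutive pendant attachments give the path recurrence
`D(G_v^{(ℓ+3)}) = x (D(G_v^{(ℓ+2)}) + D(G_v^{(ℓ+1)}) + D(G_v^{(ℓ)}))`.
If four consecutive polynomials are unimodal with modes increasing by `0` or `1` at each step, the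
coefficients of the next one increase below the last mode `m₃` and decrease from `m₃ + 1` on, so
it is unimodal with mode `m₃` or `m₃ + 1`, and the hypothesis propagates along `ℓ`.
-/

open Finset Polynomial

section SubsetPoly

variable {α β : Type*} [Fintype α]

open Classical in
noncomputable def subsetPoly (P : Finset α → Prop) : ℕ[X] :=
  ∑ U with P U, X ^ #U

theorem coeff_subsetPoly (P : Finset α → Prop) (i : ℕ) :
    (subsetPoly P).coeff i = Nat.card {U : Finset α // #U = i ∧ P U} := by
  classical
  rw [subsetPoly, finsetSum_coeff, Nat.card_eq_fintype_card, Fintype.card_subtype]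
  simp [coeff_X_pow, sum_boole, filter_filter, and_comm, eq_comm]

theorem subsetPoly_false : subsetPoly (fun _ : Finset α => False) = 0 := by
  simp [subsetPoly]

theorem subsetPoly_eq_add_X_mul [Fintype β] [DecidableEq β] {e : α ↪ β} {p : β}
    (he : Set.range e = {p}ᶜ) (P : Finset β → Prop) :
    subsetPoly P = subsetPoly (fun U => P (U.map e)) +
      X * subsetPoly (fun U => P (insert p (U.map e))) := by
  classical
  have hp (U : Finset α) : p ∉ U.map e := by
    simpa [← Set.mem_range, he] using fun a _ => Set.mem_range_self (f := e) a
  have huniv : insert p (univ.map e) = univ := by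
    ext b
    simp [← Set.mem_range, he, or_iff_not_imp_left]
  have hpow : (univ.map e).powerset = univ.image (Finset.map e) := by
    ext t
    simp [subset_map_iff, eq_comm]
  have hinj : Set.InjOn (Finset.map e) (univ : Finset (Finset α)) := (map_injective e).injOn
  simp only [subsetPoly, sum_filter, mul_sum]
  rw [← powerset_univ, ← huniv, sum_powerset_insert (hp univ), hpow,
    sum_image hinj, sum_image hinj]
  congr 1 <;> refine sum_congr rfl fun U _ => ?_
  · simp
  rw [card_insert_of_notMem (hp U), card_map, pow_succ']
  split_ifs <;> simp

end SubsetPoly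

def DominatesExcept {V : Type*} (G : SimpleGraph V) (q : V) (U : Finset V) : Prop :=
  ∀ w, w ≠ q → w ∈ U ∨ ∃ u ∈ U, G.Adj u w

structure IsPendantExtension {α β : Type*} (H : SimpleGraph α) (H' : SimpleGraph β)
    (e : α ↪ β) (q : α) (p : β) : Prop where
  range_eq : Set.range e = {p}ᶜ
  adj_map : ∀ a b, H'.Adj (e a) (e b) ↔ H.Adj a b
  adj_pendant : ∀ a, H'.Adj (e a) p ↔ a = q

namespace IsPendantExtension

variable {α β : Type*} {H : SimpleGraph α} {H' : SimpleGraph β} {e : α ↪ β} {q : α} {p : β}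
  (h : IsPendantExtension H H' e q p) (U : Finset α)
include h

theorem ne_pendant (a : α) : e a ≠ p := by
  have : e a ∈ ({p}ᶜ : Set β) := by rw [← h.range_eq]; exact Set.mem_range_self a
  simpa using this

theorem forall_iff {R : β → Prop} : (∀ b, R b) ↔ R p ∧ ∀ a, R (e a) := by
  refine ⟨fun hR => ⟨hR p, fun a => hR (e a)⟩, fun ⟨hp, ha⟩ b => ?_⟩
  by_cases hb : b = p
  · exact hb ▸ hp
  · obtain ⟨a, rfl⟩ : b ∈ Set.range e := h.range_eq ▸ hb
    exact ha a

theorem dominatesExcept_map_iff : DominatesExcept H' p (U.map e) ↔ Dominates H U := by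
  simp [DominatesExcept, Dominates, h.forall_iff, h.ne_pendant, h.adj_map]

theorem dominates_map_iff : Dominates H' (U.map e) ↔ Dominates H U ∧ q ∈ U := by
  simp [Dominates, h.forall_iff, h.adj_map, h.adj_pendant, h.ne_pendant, and_comm]

variable [DecidableEq β]

theorem dominated_insert_map_iff (a : α) :
    (e a ∈ insert p (U.map e) ∨ ∃ u ∈ insert p (U.map e), H'.Adj u (e a)) ↔
      a = q ∨ a ∈ U ∨ ∃ u ∈ U, H.Adj u a := by
  simp [h.adj_map, H'.adj_comm p, h.adj_pendant, h.ne_pendant, or_left_comm]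

theorem dominatesExcept_insert_map_iff :
    DominatesExcept H' p (insert p (U.map e)) ↔ DominatesExcept H q U := by
  simp only [DominatesExcept, h.forall_iff, h.dominated_insert_map_iff]
  simp [h.ne_pendant, or_iff_not_imp_left]

theorem dominates_insert_map_iff :
    Dominates H' (insert p (U.map e)) ↔ DominatesExcept H q U := by
  simp only [Dominates, DominatesExcept, h.forall_iff, h.dominated_insert_map_iff]
  simp [or_iff_not_imp_left]

end IsPendantExtension

section DominationPolynomial

variable {α β : Type*} [Fintype α]

noncomputable def domPoly (G : SimpleGraph α) : ℕ[X] := subsetPoly (Dominates G)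

noncomputable def domExceptPoly (G : SimpleGraph α) (q : α) : ℕ[X] :=
  subsetPoly (DominatesExcept G q)

noncomputable def domMemPoly (G : SimpleGraph α) (q : α) : ℕ[X] :=
  subsetPoly fun U => Dominates G U ∧ q ∈ U

theorem coeff_domPoly (G : SimpleGraph α) (i : ℕ) : (domPoly G).coeff i = domCount G i :=
  coeff_subsetPoly _ i

namespace IsPendantExtension

variable [Fintype β] [DecidableEq β] {H : SimpleGraph α} {H' : SimpleGraph β} {e : α ↪ β}
  {q : α} {p : β} (h : IsPendantExtension H H' e q p)
include h

theorem domPoly_eq : domPoly H' = domMemPoly H q + X * domExceptPoly H q := by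
  rw [domPoly, subsetPoly_eq_add_X_mul h.range_eq]
  simp_rw [h.dominates_map_iff, h.dominates_insert_map_iff]
  rfl

theorem domExceptPoly_eq : domExceptPoly H' p = domPoly H + X * domExceptPoly H q := by
  rw [domExceptPoly, subsetPoly_eq_add_X_mul h.range_eq]
  simp_rw [h.dominatesExcept_map_iff, h.dominatesExcept_insert_map_iff]
  rfl

theorem domMemPoly_eq : domMemPoly H' p = X * domExceptPoly H q := by
  rw [domMemPoly, subsetPoly_eq_add_X_mul h.range_eq]
  simp_rw [h.dominates_insert_map_iff, mem_insert_self, and_true, mem_map,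
    h.ne_pendant, and_false, exists_false, and_false, subsetPoly_false, zero_add]
  rfl

end IsPendantExtension

theorem domPoly_eq_X_mul_of_isPendantExtension {α₁ α₂ α₃ : Type*} [Fintype α₁] [Fintype α₂]
    [Fintype α₃] [DecidableEq α₁] [DecidableEq α₂] [DecidableEq α₃]
    {H₀ : SimpleGraph α} {H₁ : SimpleGraph α₁} {H₂ : SimpleGraph α₂} {H₃ : SimpleGraph α₃}
    {e₁ : α ↪ α₁} {e₂ : α₁ ↪ α₂} {e₃ : α₂ ↪ α₃} {q : α} {p₁ : α₁} {p₂ : α₂} {p₃ : α₃}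
    (h₁ : IsPendantExtension H₀ H₁ e₁ q p₁) (h₂ : IsPendantExtension H₁ H₂ e₂ p₁ p₂)
    (h₃ : IsPendantExtension H₂ H₃ e₃ p₂ p₃) :
    domPoly H₃ = X * (domPoly H₂ + domPoly H₁ + domPoly H₀) := by
  rw [h₃.domPoly_eq, h₂.domMemPoly_eq, h₂.domExceptPoly_eq, h₂.domPoly_eq, h₁.domMemPoly_eq,
    h₁.domExceptPoly_eq]
  ring

end DominationPolynomial

section PathAttach

variable {V : Type*} (G : SimpleGraph V) (v : V)

-- The vertex to which the next path vertex is joined: `v` itself while the path is empty.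
def pathEnd : (k : ℕ) → V ⊕ Fin k
  | 0 => .inl v
  | k + 1 => .inr (Fin.last k)

theorem isPendantExtension_pathAttach (k : ℕ) :
    IsPendantExtension (pathAttach G v k) (pathAttach G v (k + 1))
      ((Function.Embedding.refl V).sumMap Fin.castSuccEmb) (pathEnd v k) (.inr (Fin.last k)) where
  range_eq := by
    ext b
    rcases b with a | j
    · simp
    · rcases j.eq_castSucc_or_eq_last with ⟨i, rfl⟩ | rfl
      · simpa [Fin.ext_iff] using i.isLt.ne
      · simpa [Fin.ext_iff] using fun i : Fin k => i.isLt.ne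
  adj_map a b := by
    rcases a with a | i <;> rcases b with b | j <;>
      simp [pathAttach, pathAttachRel, Fin.ext_iff]
  adj_pendant a := by
    rcases a with a | i
    · cases k <;> simp [pathAttach, pathAttachRel, pathEnd]
    · cases k with
      | zero => exact i.elim0
      | succ k => simp [pathAttach, pathAttachRel, pathEnd, Fin.ext_iff]; omega

end PathAttach

section PathAttachCount

variable {V : Type*} [Fintype V] (G : SimpleGraph V) (v : V) (k : ℕ)

theorem domPoly_pathAttach_add_three :
    domPoly (pathAttach G v (k + 3)) =
      X * (domPoly (pathAttach G v (k + 2)) + domPoly (pathAttach G v (k + 1)) +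
        domPoly (pathAttach G v k)) := by
  classical
  exact domPoly_eq_X_mul_of_isPendantExtension (isPendantExtension_pathAttach G v k)
    (isPendantExtension_pathAttach G v (k + 1)) (isPendantExtension_pathAttach G v (k + 2))

theorem domCount_pathAttach_add_three_zero : domCount (pathAttach G v (k + 3)) 0 = 0 := by
  rw [← coeff_domPoly, domPoly_pathAttach_add_three, coeff_X_mul_zero]

theorem domCount_pathAttach_add_three_succ (i : ℕ) :
    domCount (pathAttach G v (k + 3)) (i + 1) =
      domCount (pathAttach G v (k + 2)) i + domCount (pathAttach G v (k + 1)) i +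
        domCount (pathAttach G v k) i := by
  simp only [← coeff_domPoly, domPoly_pathAttach_add_three, coeff_X_mul, coeff_add]

end PathAttachCount

section Unimodality

theorem exists_unimodalWithMode_of_le_of_ge {s : ℕ → ℕ} {m : ℕ}
    (hinc : ∀ i < m, s i ≤ s (i + 1)) (hdec : ∀ i, m + 1 ≤ i → s (i + 1) ≤ s i) :
    ∃ k, UnimodalWithMode s k ∧ m ≤ k ∧ k ≤ m + 1 := by
  by_cases hm : s (m + 1) ≤ s m
  · refine ⟨m, ⟨hinc, fun i hi => ?_⟩, le_rfl, m.le_succ⟩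
    rcases hi.eq_or_lt with rfl | hi
    · exact hm
    · exact hdec i hi
  · refine ⟨m + 1, ⟨fun i hi => ?_, hdec⟩, m.le_succ, le_rfl⟩
    rcases (Nat.lt_succ_iff.1 hi).eq_or_lt with rfl | hi
    · exact (not_le.1 hm).le
    · exact hinc i hi

theorem exists_unimodalWithMode_of_recurrence {d₀ d₁ d₂ d₃ d₄ : ℕ → ℕ} {m₀ m₁ m₂ m₃ : ℕ}
    (h₀ : UnimodalWithMode d₀ m₀) (h₁ : UnimodalWithMode d₁ m₁)
    (h₂ : UnimodalWithMode d₂ m₂) (h₃ : UnimodalWithMode d₃ m₃)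
    (hm₀₁ : m₀ ≤ m₁) (hm₁₂ : m₁ ≤ m₂) (hm₂₁ : m₂ ≤ m₁ + 1) (hm₂₃ : m₂ ≤ m₃)
    (hm₃₂ : m₃ ≤ m₂ + 1) (hd₃ : ∀ i, d₃ (i + 1) = d₂ i + d₁ i + d₀ i)
    (hd₄_zero : d₄ 0 = 0) (hd₄ : ∀ i, d₄ (i + 1) = d₃ i + d₂ i + d₁ i) :
    ∃ m₄, UnimodalWithMode d₄ m₄ ∧ m₃ ≤ m₄ ∧ m₄ ≤ m₃ + 1 := by
  obtain ⟨h₀inc, h₀dec⟩ := h₀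
  obtain ⟨h₁inc, h₁dec⟩ := h₁
  obtain ⟨h₂inc, h₂dec⟩ := h₂
  obtain ⟨h₃inc, h₃dec⟩ := h₃
  refine exists_unimodalWithMode_of_le_of_ge (fun i hi => ?_) (fun i hi => ?_)
  · rcases i with _ | j
    · rw [hd₄_zero]
      exact Nat.zero_le _
    rw [hd₄, hd₄]
    by_cases hj : j < m₁
    · have := h₃inc j (by omega)
      have := h₂inc j (by omega)
      have := h₁inc j hj
      omega
    · -- Here `j = m₁` and `m₃ = m₁ + 2`: `d₃` still grows at `j + 1`, i.e. `d₂ + d₁ + d₀`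
      -- grows at `j`, while `d₀` does not.
      obtain rfl : j = m₁ := by omega
      have h₃up := h₃inc (j + 1) (by omega)
      rw [hd₃, hd₃] at h₃up
      have := h₃inc j (by omega)
      have := h₀dec j hm₀₁
      omega
  · obtain ⟨j, rfl⟩ : ∃ j, i = j + 1 := ⟨i - 1, by omega⟩
    rw [hd₄, hd₄]
    have := h₃dec j (by omega)
    have := h₂dec j (by omega)
    have := h₁dec j (by omega)
    omega

theorem unimodalSeq_of_recurrence (d : ℕ → ℕ → ℕ) (μ : ℕ → ℕ)
    (hmode : ∀ i, i ≤ 3 → UnimodalWithMode (d i) (μ i))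
    (hdiff : ∀ i, 1 ≤ i → i ≤ 3 → μ (i - 1) ≤ μ i ∧ μ i ≤ μ (i - 1) + 1)
    (hzero : ∀ k, d (k + 3) 0 = 0)
    (hrec : ∀ k i, d (k + 3) (i + 1) = d (k + 2) i + d (k + 1) i + d k i) :
    ∀ l, UnimodalSeq (d l) := by
  have window : ∀ k, ∃ m₀ m₁ m₂ m₃,
      UnimodalWithMode (d k) m₀ ∧ UnimodalWithMode (d (k + 1)) m₁ ∧
      UnimodalWithMode (d (k + 2)) m₂ ∧ UnimodalWithMode (d (k + 3)) m₃ ∧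
      m₀ ≤ m₁ ∧ m₁ ≤ m₂ ∧ m₂ ≤ m₁ + 1 ∧ m₂ ≤ m₃ ∧ m₃ ≤ m₂ + 1 := by
    intro k
    induction k with
    | zero =>
      obtain ⟨h₀₁, -⟩ := hdiff 1 le_rfl (by norm_num)
      obtain ⟨h₁₂, h₂₁⟩ := hdiff 2 (by norm_num) (by norm_num)
      obtain ⟨h₂₃, h₃₂⟩ := hdiff 3 (by norm_num) le_rfl
      exact ⟨μ 0, μ 1, μ 2, μ 3, hmode 0 (by norm_num), hmode 1 (by norm_num),
        hmode 2 (by norm_num), hmode 3 le_rfl, h₀₁, h₁₂, h₂₁, h₂₃, h₃₂⟩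
    | succ k ih =>
      obtain ⟨m₀, m₁, m₂, m₃, h₀, h₁, h₂, h₃, hm₀₁, hm₁₂, hm₂₁, hm₂₃, hm₃₂⟩ := ih
      obtain ⟨m₄, h₄, hm₃₄, hm₄₃⟩ := exists_unimodalWithMode_of_recurrence h₀ h₁ h₂ h₃
        hm₀₁ hm₁₂ hm₂₁ hm₂₃ hm₃₂ (hrec k) (hzero (k + 1)) (hrec (k + 1))
      exact ⟨m₁, m₂, m₃, m₄, h₁, h₂, h₃, h₄, hm₁₂, hm₂₃, hm₃₂, hm₃₄, hm₄₃⟩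
  intro l
  obtain ⟨m, -, -, -, h, -⟩ := window l
  exact ⟨m, h⟩

end Unimodality

theorem unimodal_pathAttach {V : Type*} [Fintype V] (G : SimpleGraph V) (v : V) (μ : ℕ → ℕ)
    (hmode : ∀ i, i ≤ 3 → UnimodalWithMode (domCount (pathAttach G v i)) (μ i))
    (hdiff : ∀ i, 1 ≤ i → i ≤ 3 → μ (i - 1) ≤ μ i ∧ μ i ≤ μ (i - 1) + 1) :
    ∀ l : ℕ, UnimodalSeq (domCount (pathAttach G v l)) :=
  unimodalSeq_of_recurrence (fun l => domCount (pathAttach G v l)) μ hmode hdiff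
    (domCount_pathAttach_add_three_zero G v) (domCount_pathAttach_add_three_succ G v)
end

section
/- Let G be a graph on n vertices. If n is odd and Γ(G) ≤ 4, or n is even and Γ(G) ≤ 3, then the domination polynomial of G is unimodal with a mode at ⌈n/2⌉ or ⌈n/2⌉+1. -/
/-- A minimal dominating set: dominating, with no proper subset dominating. -/
def MinimalDominating {V : Type*} (G : SimpleGraph V) (U : Finset V) : Prop :=
  Dominates G U ∧ ∀ W ⊂ U, ¬ Dominates G W

/-- The upper domination number: the maximum size of a minimal dominating set. -/
noncomputable def upperDom {V : Type*} [Fintype V] (G : SimpleGraph V) : ℕ :=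
  sSup {k : ℕ | ∃ U : Finset V, U.card = k ∧ MinimalDominating G U}

/-!
Comparing dominating sets of consecutive sizes by double counting along inclusion: adding a
vertex to a dominating `i`-set yields `n - i` dominating `(i + 1)`-sets, while each
`(i + 1)`-set arises from at most `i + 1` of them, so `d_i ≤ d_{i+1}` once `i + 1 ≤ n - i`.
Conversely a dominating `(i + 1)`-set contains a minimal dominating set of size at most `Γ`, and
removing any of the other `i + 1 - Γ` vertices keeps it dominating, while each `i`-set has at
most `n - i` one-point extensions, so `d_{i+1} ≤ d_i` once `n - i ≤ i + 1 - Γ`.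
For `Γ ≤ 4` (`n` odd) or `Γ ≤ 3` (`n` even) the two ranges leave only the step from `⌈n/2⌉`
to `⌈n/2⌉ + 1` undecided, and either outcome gives a mode there.
-/

open Finset
open scoped FinsetFamily

namespace Finset

variable {α : Type*} [DecidableEq α] [Fintype α] {𝒜 ℬ : Finset (Finset α)} {r m : ℕ}

theorem card_mul_le_card_upShadow_mul (h𝒜 : (𝒜 : Set (Finset α)).Sized r) :
    #𝒜 * (Fintype.card α - r) ≤ #(∂⁺ 𝒜) * (r + 1) := by
  have hcompl : (𝒜ᶜˢ : Set (Finset α)).Sized (Fintype.card α - r) := by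
    intro s hs
    rw [mem_coe, mem_compls] at hs
    rw [← h𝒜 hs, ← card_compl, compl_compl]
  calc #𝒜 * (Fintype.card α - r)
      = #𝒜ᶜˢ * (Fintype.card α - r) := by rw [card_compls]
    _ ≤ #(∂ 𝒜ᶜˢ) * (Fintype.card α - (Fintype.card α - r) + 1) :=
        card_mul_le_card_shadow_mul hcompl
    _ ≤ #(∂⁺ 𝒜) * (r + 1) := by
        rw [shadow_compls, card_compls]
        gcongr
        omega

theorem card_mul_le_card_mul_of_le_card_filter_erase_mem
    (h𝒜 : (𝒜 : Set (Finset α)).Sized r) (hℬ : (ℬ : Set (Finset α)).Sized (r + 1))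
    (hm : ∀ t ∈ ℬ, m ≤ #{a ∈ t | t.erase a ∈ 𝒜}) :
    #ℬ * m ≤ #𝒜 * (Fintype.card α - r) := by
  refine card_mul_le_card_mul (fun t s => s ⊆ t) (fun t ht => ?_) (fun s hs => ?_)
  · calc m ≤ #{a ∈ t | t.erase a ∈ 𝒜} := hm t ht
      _ = #({a ∈ t | t.erase a ∈ 𝒜}.image t.erase) :=
          (card_image_of_injOn (t.erase_injOn.mono fun _ ha => (mem_filter.1 ha).1)).symm
      _ ≤ #(𝒜.bipartiteAbove (fun t s => s ⊆ t) t) := by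
          refine card_le_card fun s hs => ?_
          obtain ⟨a, ha, rfl⟩ := mem_image.1 hs
          exact (mem_bipartiteAbove _).2 ⟨(mem_filter.1 ha).2, erase_subset a t⟩
  · calc #(ℬ.bipartiteBelow (fun t s => s ⊆ t) s)
        ≤ #(sᶜ.image (insert · s)) := by
          refine card_le_card fun t ht => ?_
          obtain ⟨htℬ, hst⟩ := (mem_bipartiteBelow _).1 ht
          obtain ⟨a, ha, rfl⟩ :=
            exists_eq_insert_iff.2 ⟨hst, by rw [h𝒜 hs, hℬ htℬ]⟩
          exact mem_image_of_mem _ (mem_compl.2 ha)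
      _ ≤ #sᶜ := card_image_le
      _ = Fintype.card α - r := by rw [card_compl, h𝒜 hs]

end Finset

namespace Dominates

variable {V : Type*} {G : SimpleGraph V} {U W : Finset V}

theorem mono (hU : Dominates G U) (hUW : U ⊆ W) : Dominates G W := fun v =>
  (hU v).imp (fun hv => hUW hv) fun ⟨u, hu, huv⟩ => ⟨u, hUW hu, huv⟩

theorem exists_minimalDominating_subset (hU : Dominates G U) :
    ∃ W ⊆ U, MinimalDominating G W := by
  obtain ⟨W, hWU, hW⟩ := exists_minimal_le_of_wellFoundedLT (Dominates G) U hU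
  exact ⟨W, hWU, hW.prop, fun _ hW' => hW.not_prop_of_lt hW'⟩

end Dominates

theorem MinimalDominating.card_le_upperDom {V : Type*} [Fintype V] {G : SimpleGraph V}
    {W : Finset V} (hW : MinimalDominating G W) : #W ≤ upperDom G :=
  le_csSup ⟨Fintype.card V, fun _ ⟨U, hU, _⟩ => hU ▸ card_le_univ U⟩ ⟨W, rfl, hW⟩

section DominatingSets

open scoped Classical

variable {V : Type*} [Fintype V] (G : SimpleGraph V)

noncomputable def dominatingSets (i : ℕ) : Finset (Finset V) :=
  {U ∈ powersetCard i univ | Dominates G U}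

variable {G}

theorem mem_dominatingSets {i : ℕ} {U : Finset V} :
    U ∈ dominatingSets G i ↔ #U = i ∧ Dominates G U := by
  simp [dominatingSets]

theorem dominatingSets_sized (i : ℕ) : (dominatingSets G i : Set (Finset V)).Sized i :=
  fun _ hU => (mem_dominatingSets.1 hU).1

theorem domCount_eq_card_dominatingSets (i : ℕ) : domCount G i = #(dominatingSets G i) := by
  rw [domCount, Nat.card_eq_fintype_card, ← Fintype.card_coe]
  exact Fintype.card_congr (Equiv.subtypeEquivRight fun _ => mem_dominatingSets.symm)

theorem upShadow_dominatingSets_subset (i : ℕ) :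
    ∂⁺ (dominatingSets G i) ⊆ dominatingSets G (i + 1) := by
  intro T hT
  obtain ⟨U, hU, a, ha, rfl⟩ := mem_upShadow_iff.1 hT
  rw [mem_dominatingSets] at hU ⊢
  exact ⟨by rw [card_insert_of_notMem ha, hU.1], hU.2.mono (subset_insert a U)⟩

theorem domCount_le_domCount_succ {i : ℕ} (hi : 2 * i < Fintype.card V) :
    domCount G i ≤ domCount G (i + 1) := by
  rw [domCount_eq_card_dominatingSets, domCount_eq_card_dominatingSets]
  refine Nat.le_of_mul_le_mul_right ?_ (Nat.succ_pos i)
  calc #(dominatingSets G i) * (i + 1)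
      ≤ #(dominatingSets G i) * (Fintype.card V - i) := Nat.mul_le_mul_left _ (by omega)
    _ ≤ #(∂⁺ (dominatingSets G i)) * (i + 1) :=
        card_mul_le_card_upShadow_mul (dominatingSets_sized i)
    _ ≤ #(dominatingSets G (i + 1)) * (i + 1) := by gcongr; exact upShadow_dominatingSets_subset i

theorem le_card_filter_erase_mem_dominatingSets {i : ℕ} {T : Finset V}
    (hT : T ∈ dominatingSets G (i + 1)) :
    i + 1 - upperDom G ≤ #{a ∈ T | T.erase a ∈ dominatingSets G i} := by
  obtain ⟨hTcard, hTdom⟩ := mem_dominatingSets.1 hT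
  obtain ⟨W, hWT, hW⟩ := hTdom.exists_minimalDominating_subset
  have hsdiff : T \ W ⊆ {a ∈ T | T.erase a ∈ dominatingSets G i} := by
    intro a ha
    obtain ⟨haT, haW⟩ := mem_sdiff.1 ha
    refine mem_filter.2 ⟨haT, mem_dominatingSets.2 ⟨?_, hW.1.mono ?_⟩⟩
    · rw [card_erase_of_mem haT, hTcard, Nat.add_sub_cancel]
    · exact fun x hx => mem_erase.2 ⟨fun hxa => haW (hxa ▸ hx), hWT hx⟩
  calc i + 1 - upperDom G ≤ #(T \ W) := by
        rw [card_sdiff_of_subset hWT, hTcard]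
        exact Nat.sub_le_sub_left hW.card_le_upperDom _
    _ ≤ _ := card_le_card hsdiff

theorem dominatingSets_eq_empty {i : ℕ} (hi : Fintype.card V < i) :
    dominatingSets G i = ∅ := by
  rw [dominatingSets, powersetCard_eq_empty.2 (by rwa [card_univ]), filter_empty]

theorem domCount_succ_le_domCount {i : ℕ} (hi : Fintype.card V + upperDom G ≤ 2 * i + 1) :
    domCount G (i + 1) ≤ domCount G i := by
  rw [domCount_eq_card_dominatingSets, domCount_eq_card_dominatingSets]
  rcases le_or_gt (Fintype.card V) i with hn | hn
  · rw [dominatingSets_eq_empty (by omega), card_empty]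
    exact Nat.zero_le _
  refine Nat.le_of_mul_le_mul_right ?_ (Nat.sub_pos_of_lt hn)
  calc #(dominatingSets G (i + 1)) * (Fintype.card V - i)
      ≤ #(dominatingSets G (i + 1)) * (i + 1 - upperDom G) := Nat.mul_le_mul_left _ (by omega)
    _ ≤ #(dominatingSets G i) * (Fintype.card V - i) :=
        card_mul_le_card_mul_of_le_card_filter_erase_mem (dominatingSets_sized i)
          (dominatingSets_sized (i + 1)) fun _ hT => le_card_filter_erase_mem_dominatingSets hT

end DominatingSets

theorem unimodalWithMode_or_succ {d : ℕ → ℕ} {k : ℕ} (hinc : ∀ i < k, d i ≤ d (i + 1))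
    (hdec : ∀ i, k + 1 ≤ i → d (i + 1) ≤ d i) :
    UnimodalWithMode d k ∨ UnimodalWithMode d (k + 1) := by
  rcases le_total (d (k + 1)) (d k) with hk | hk
  · refine Or.inl ⟨hinc, fun i hi => ?_⟩
    rcases hi.eq_or_lt with rfl | hi
    exacts [hk, hdec i hi]
  · refine Or.inr ⟨fun i hi => ?_, hdec⟩
    rcases Nat.lt_succ_iff_lt_or_eq.1 hi with hi | rfl
    exacts [hinc i hi, hk]

theorem unimodal_of_low_upperDom {V : Type*} [Fintype V] (G : SimpleGraph V)
    (h : (Odd (Fintype.card V) ∧ upperDom G ≤ 4) ∨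
      (Even (Fintype.card V) ∧ upperDom G ≤ 3)) :
    UnimodalWithMode (domCount G) ((Fintype.card V + 1) / 2) ∨
      UnimodalWithMode (domCount G) ((Fintype.card V + 1) / 2 + 1) := by
  refine unimodalWithMode_or_succ (fun i hi => domCount_le_domCount_succ (by omega))
    fun i hi => domCount_succ_le_domCount ?_
  rcases h with ⟨⟨m, hm⟩, hΓ⟩ | ⟨⟨m, hm⟩, hΓ⟩ <;> omega
end
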